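/- arXiv:2005.13579 — 6 statements merged into one kernel-verified Lean document; each statement's English description precedes it below -/
import Mathlib

section
/- For any geodesic metric space X and integer n ≥ 2, for each finite set A ⊆ X with 1 ≤ |A| ≤ n, there exists a finite set B ⊆ X with 1 ≤ |B| ≤ n−1 such that d_H(A, B) ≤ δ_n(A)/2. -/
/-!
If `|A| < n` then `δ_n(A) = 0` and `B = A` works. If `|A| = n`, pick two points `p ≠ q` of `A`
realising the minimal distance and replace them by a midpoint `m` of a geodesic from `p` to `q`:
the new set has at most `n - 1` points, `m` lies within `d(p, q)/2` of both `p` and `q`, and all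
other points are unchanged, so the Hausdorff distance is at most `d(p, q)/2 = δ_n(A)/2`.
-/

open Metric Set

/-- Minimum separation: min pairwise distance among points of `A` if `|A| = n`, else 0. -/
noncomputable def minSep {X : Type*} [MetricSpace X] (n : ℕ) (A : Finset X) : ℝ :=
  if A.card = n then
    sInf {d : ℝ | ∃ p ∈ A, ∃ q ∈ A, p ≠ q ∧ dist p q = d}
  else 0

section

variable {X : Type*} [PseudoMetricSpace X]

lemma exists_dist_eq_half_of_geodesic {p q : X}
    (h : ∃ γ : ℝ → X, γ 0 = p ∧ γ 1 = q ∧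
      ∀ s ∈ Icc (0:ℝ) 1, ∀ t ∈ Icc (0:ℝ) 1, dist (γ s) (γ t) = |s - t| * dist p q) :
    ∃ m : X, dist p m = dist p q / 2 ∧ dist q m = dist p q / 2 := by
  obtain ⟨γ, rfl, rfl, hγ⟩ := h
  have half_mem : (1 / 2 : ℝ) ∈ Icc (0:ℝ) 1 := by norm_num
  refine ⟨γ (1 / 2), ?_, ?_⟩
  · rw [hγ 0 (by norm_num) _ half_mem]
    norm_num
    ring
  · rw [hγ 1 (by norm_num) _ half_mem]
    norm_num
    ring

lemma hausdorffDist_insert_diff_pair_le {s : Set X} {p q m : X} {r : ℝ} (hp : p ∈ s)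
    (hpm : dist p m ≤ r) (hqm : dist q m ≤ r) :
    hausdorffDist s (insert m (s \ {p, q})) ≤ r := by
  have hr : 0 ≤ r := dist_nonneg.trans hpm
  apply hausdorffDist_le_of_mem_dist hr
  · intro x hx
    by_cases hxpq : x ∈ ({p, q} : Set X)
    · refine ⟨m, mem_insert m _, ?_⟩
      rcases hxpq with rfl | rfl <;> assumption
    · exact ⟨x, mem_insert_of_mem m ⟨hx, hxpq⟩, by simpa using hr⟩
  · rintro x (rfl | ⟨hx, -⟩)
    · exact ⟨p, hp, by rwa [dist_comm]⟩
    · exact ⟨x, hx, by simpa using hr⟩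

end

lemma Finset.card_insert_sdiff_pair_le {α : Type*} [DecidableEq α] {s : Finset α} {p q : α}
    (hp : p ∈ s) (hq : q ∈ s) (hpq : p ≠ q) (m : α) :
    (insert m (s \ {p, q})).card ≤ s.card - 1 := by
  have hsub : {p, q} ⊆ s := Finset.insert_subset hp (Finset.singleton_subset_iff.2 hq)
  have hcard : 2 ≤ s.card := Finset.card_pair hpq ▸ Finset.card_le_card hsub
  calc (insert m (s \ {p, q})).card ≤ (s \ {p, q}).card + 1 := Finset.card_insert_le _ _
    _ = s.card - 2 + 1 := by rw [Finset.card_sdiff_of_subset hsub, Finset.card_pair hpq]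
    _ = s.card - 1 := by omega

lemma exists_ne_dist_eq_minSep {X : Type*} [MetricSpace X] {n : ℕ} {A : Finset X}
    (hAn : A.card = n) (hn : 2 ≤ n) :
    ∃ p ∈ A, ∃ q ∈ A, p ≠ q ∧ minSep n A = dist p q := by
  set S : Set ℝ := {d : ℝ | ∃ p ∈ A, ∃ q ∈ A, p ≠ q ∧ dist p q = d}
  have hS_finite : S.Finite := by
    refine ((A.finite_toSet.prod A.finite_toSet).image fun pq : X × X => dist pq.1 pq.2).subset ?_
    rintro d ⟨p, hp, q, hq, -, rfl⟩
    exact ⟨(p, q), ⟨hp, hq⟩, rfl⟩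
  have hS_nonempty : S.Nonempty := by
    obtain ⟨p, hp, q, hq, hpq⟩ := Finset.one_lt_card.1 (by omega : 1 < A.card)
    exact ⟨dist p q, p, hp, q, hq, hpq, rfl⟩
  obtain ⟨p, hp, q, hq, hpq, hdist⟩ := hS_nonempty.csInf_mem hS_finite
  exact ⟨p, hp, q, hq, hpq, by rw [minSep, if_pos hAn, hdist]⟩

theorem stmt1 {X : Type*} [MetricSpace X]
    (hgeo : ∀ p q : X, ∃ γ : ℝ → X, γ 0 = p ∧ γ 1 = q ∧
      ∀ s ∈ Icc (0:ℝ) 1, ∀ t ∈ Icc (0:ℝ) 1, dist (γ s) (γ t) = |s - t| * dist p q)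
    (n : ℕ) (hn : 2 ≤ n)
    (A : Finset X) (hA : A.Nonempty) (hcard : A.card ≤ n) :
    ∃ B : Finset X, B.Nonempty ∧ B.card ≤ n - 1 ∧
      hausdorffDist (A : Set X) (B : Set X) ≤ minSep n A / 2 := by
  classical
  by_cases hAn : A.card = n
  · obtain ⟨p, hp, q, hq, hpq, hsep⟩ := exists_ne_dist_eq_minSep hAn hn
    obtain ⟨m, hpm, hqm⟩ := exists_dist_eq_half_of_geodesic (hgeo p q)
    refine ⟨insert m (A \ {p, q}), Finset.insert_nonempty _ _, ?_, ?_⟩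
    · have := Finset.card_insert_sdiff_pair_le hp hq hpq m
      omega
    · rw [hsep, Finset.coe_insert, Finset.coe_sdiff, Finset.coe_pair]
      exact hausdorffDist_insert_diff_pair_le (Finset.mem_coe.2 hp) hpm.le hqm.le
  · refine ⟨A, hA, by omega, ?_⟩
    rw [minSep, if_neg hAn, hausdorffDist_self_zero]
    norm_num
end

section
/- Let X and Y be metric spaces, 1 ≤ k < n, and suppose there exists an L-Lipschitz retraction r : X(n) → X(k). Suppose f : X → Y and g : Y → X are Lipschitz maps with f ∘ g = id_Y. Then there exists a Lipschitz retraction s : Y(n) → Y(k) with Lip(s) ≤ Lip(f)·Lip(g)·L. -/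
/-!
The retraction is `s = f_n ∘ r ∘ g_n`. It fixes `Y(k)` because `f ∘ g = id`, and it is
`Lip(f) · L · Lip(g)`-Lipschitz because taking images under a `K`-Lipschitz map is `K`-Lipschitz
for the Hausdorff distance.
-/

open Metric
open scoped NNReal

namespace LipschitzWith

variable {α β : Type*}

section PseudoEMetric

variable [PseudoEMetricSpace α] [PseudoEMetricSpace β] {K : ℝ≥0} {f : α → β}

theorem infEDist_image_le (hf : LipschitzWith K f) (x : α) {t : Set α} (ht : t.Nonempty) :
    infEDist (f x) (f '' t) ≤ K * infEDist x t := by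
  obtain ⟨y, hy⟩ := ht
  rcases eq_or_ne K 0 with rfl | hK
  · have := hf x y
    simp only [ENNReal.coe_zero, zero_mul, nonpos_iff_eq_zero] at this ⊢
    exact le_antisymm ((infEDist_le_edist_of_mem (Set.mem_image_of_mem f hy)).trans this.le) bot_le
  · simp only [infEDist, iInf_image]
    simp_rw [ENNReal.mul_iInf_of_ne (ENNReal.coe_ne_zero.2 hK) ENNReal.coe_ne_top]
    exact iInf₂_mono fun z _ => hf x z

theorem hausdorffEDist_image_le (hf : LipschitzWith K f) {s t : Set α} (hs : s.Nonempty)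
    (ht : t.Nonempty) : hausdorffEDist (f '' s) (f '' t) ≤ K * hausdorffEDist s t := by
  refine hausdorffEDist_le_of_infEDist ?_ ?_
  · rintro _ ⟨x, hx, rfl⟩
    exact (hf.infEDist_image_le x ht).trans
      (mul_le_mul_right (infEDist_le_hausdorffEDist_of_mem hx) _)
  · rintro _ ⟨x, hx, rfl⟩
    rw [hausdorffEDist_comm]
    exact (hf.infEDist_image_le x hs).trans
      (mul_le_mul_right (infEDist_le_hausdorffEDist_of_mem hx) _)

end PseudoEMetric

variable [PseudoMetricSpace α] [PseudoMetricSpace β] {K : ℝ≥0} {f : α → β}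

theorem hausdorffDist_image_le (hf : LipschitzWith K f) {s t : Set α} (hs : s.Nonempty)
    (ht : t.Nonempty) (hs' : Bornology.IsBounded s) (ht' : Bornology.IsBounded t) :
    hausdorffDist (f '' s) (f '' t) ≤ K * hausdorffDist s t := by
  have hfin := hausdorffEDist_ne_top_of_nonempty_of_bounded hs ht hs' ht'
  rw [hausdorffDist, hausdorffDist, ← ENNReal.coe_toReal K, ← ENNReal.toReal_mul]
  exact ENNReal.toReal_mono (ENNReal.mul_ne_top ENNReal.coe_ne_top hfin)
    (hf.hausdorffEDist_image_le hs ht)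

theorem hausdorffDist_finset_image_le [DecidableEq β] (hf : LipschitzWith K f) {S T : Finset α}
    (hS : S.Nonempty) (hT : T.Nonempty) :
    hausdorffDist ((S.image f : Finset β) : Set β) (T.image f : Set β) ≤
      K * hausdorffDist (S : Set α) (T : Set α) := by
  rw [Finset.coe_image, Finset.coe_image]
  exact hf.hausdorffDist_image_le hS hT S.finite_toSet.isBounded T.finite_toSet.isBounded

end LipschitzWith

open Finset

theorem hausdorffDist_image_retract_image_le {X Y : Type*} [PseudoMetricSpace X]
    [PseudoMetricSpace Y] [DecidableEq X] [DecidableEq Y] {n : ℕ} {L : ℝ} {Kf Kg : ℝ≥0}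
    {r : Finset X → Finset X} {f : X → Y} {g : Y → X}
    (hmaps : ∀ A : Finset X, A.Nonempty → A.card ≤ n → (r A).Nonempty)
    (hlip : ∀ A B : Finset X, A.Nonempty → A.card ≤ n → B.Nonempty → B.card ≤ n →
      hausdorffDist (r A : Set X) (r B : Set X) ≤ L * hausdorffDist (A : Set X) (B : Set X))
    (hf : LipschitzWith Kf f) (hg : LipschitzWith Kg g) (hfg : Function.LeftInverse f g)
    {A B : Finset Y} (hA : A.Nonempty) (hAn : A.card ≤ n) (hB : B.Nonempty) (hBn : B.card ≤ n) :
    hausdorffDist ((r (A.image g)).image f : Set Y) ((r (B.image g)).image f : Set Y) ≤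
      Kf * Kg * L * hausdorffDist (A : Set Y) (B : Set Y) := by
  have hgAn : (A.image g).card ≤ n := card_image_le.trans hAn
  have hgBn : (B.image g).card ≤ n := card_image_le.trans hBn
  have hr := hlip _ _ (hA.image g) hgAn (hB.image g) hgBn
  have hg_AB := hg.hausdorffDist_finset_image_le hA hB
  have hL : L * hausdorffDist (A.image g : Set X) (B.image g) ≤
      L * (Kg * hausdorffDist (A : Set Y) B) := by
    rcases le_or_gt 0 L with hL | hL
    · exact mul_le_mul_of_nonneg_left hg_AB hL
    -- for `L < 0`, `hr` forces `H(g A, g B) = 0`, hence `H(A, B) = H(f (g A), f (g B)) = 0`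
    have hgAB0 : hausdorffDist (A.image g : Set X) (B.image g) = 0 := by
      nlinarith [hausdorffDist_nonneg (s := (r (A.image g) : Set X)) (t := r (B.image g)),
        hausdorffDist_nonneg (s := (A.image g : Set X)) (t := B.image g)]
    have hf_AB := hf.hausdorffDist_finset_image_le (hA.image g) (hB.image g)
    rw [image_image, image_image, hfg.comp_eq_id, image_id, image_id, hgAB0, mul_zero] at hf_AB
    rw [hgAB0, le_antisymm hf_AB hausdorffDist_nonneg, mul_zero, mul_zero, mul_zero]
  calc _ ≤ Kf * hausdorffDist (r (A.image g) : Set X) (r (B.image g)) :=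
        hf.hausdorffDist_finset_image_le (hmaps _ (hA.image g) hgAn) (hmaps _ (hB.image g) hgBn)
    _ ≤ Kf * (L * (Kg * hausdorffDist (A : Set Y) B)) :=
        mul_le_mul_of_nonneg_left (hr.trans hL) Kf.2
    _ = Kf * Kg * L * hausdorffDist (A : Set Y) B := by ring

theorem stmt3_general {X Y : Type*} [MetricSpace X] [MetricSpace Y] (n k : ℕ)
    (L Lf Lg : ℝ) (r : Finset X → Finset X)
    (hmaps : ∀ A : Finset X, A.Nonempty → A.card ≤ n → (r A).Nonempty ∧ (r A).card ≤ k)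
    (hretr : ∀ B : Finset X, B.Nonempty → B.card ≤ k → r B = B)
    (hlip : ∀ A B : Finset X, A.Nonempty → A.card ≤ n → B.Nonempty → B.card ≤ n →
      hausdorffDist (r A : Set X) (r B : Set X) ≤ L * hausdorffDist (A : Set X) (B : Set X))
    (f : X → Y) (g : Y → X)
    (hLf : 0 ≤ Lf) (hLg : 0 ≤ Lg)
    (hf : ∀ x x' : X, dist (f x) (f x') ≤ Lf * dist x x')
    (hg : ∀ y y' : Y, dist (g y) (g y') ≤ Lg * dist y y')
    (hfg : ∀ y : Y, f (g y) = y) :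
    ∃ s : Finset Y → Finset Y,
      (∀ A : Finset Y, A.Nonempty → A.card ≤ n → (s A).Nonempty ∧ (s A).card ≤ k) ∧
      (∀ B : Finset Y, B.Nonempty → B.card ≤ k → s B = B) ∧
      (∀ A B : Finset Y, A.Nonempty → A.card ≤ n → B.Nonempty → B.card ≤ n →
        hausdorffDist (s A : Set Y) (s B : Set Y) ≤
          (Lf * Lg * L) * hausdorffDist (A : Set Y) (B : Set Y)) := by
  classical
  have hfL : LipschitzWith ⟨Lf, hLf⟩ f := .of_dist_le_mul hf
  have hgL : LipschitzWith ⟨Lg, hLg⟩ g := .of_dist_le_mul hg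
  refine ⟨fun A => (r (A.image g)).image f, fun A hA hAn => ?_, fun B hB hBk => ?_,
    fun A B hA hAn hB hBn => ?_⟩
  · obtain ⟨hne, hcard⟩ := hmaps _ (hA.image g) (card_image_le.trans hAn)
    exact ⟨hne.image f, card_image_le.trans hcard⟩
  · simp only [hretr _ (hB.image g) (card_image_le.trans hBk), image_image,
      Function.LeftInverse.comp_eq_id hfg, image_id]
  · exact hausdorffDist_image_retract_image_le (fun A hA hAn => (hmaps A hA hAn).1) hlip hfL hgL
      hfg hA hAn hB hBn

theorem stmt3 {X Y : Type*} [MetricSpace X] [MetricSpace Y] (n k : ℕ) (hk : 1 ≤ k) (hkn : k < n)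
    (L Lf Lg : ℝ) (r : Finset X → Finset X)
    (hmaps : ∀ A : Finset X, A.Nonempty → A.card ≤ n → (r A).Nonempty ∧ (r A).card ≤ k)
    (hretr : ∀ B : Finset X, B.Nonempty → B.card ≤ k → r B = B)
    (hlip : ∀ A B : Finset X, A.Nonempty → A.card ≤ n → B.Nonempty → B.card ≤ n →
      hausdorffDist (r A : Set X) (r B : Set X) ≤ L * hausdorffDist (A : Set X) (B : Set X))
    (f : X → Y) (g : Y → X)
    (hLf : 0 ≤ Lf) (hLg : 0 ≤ Lg)
    (hf : ∀ x x' : X, dist (f x) (f x') ≤ Lf * dist x x')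
    (hg : ∀ y y' : Y, dist (g y) (g y') ≤ Lg * dist y y')
    (hfg : ∀ y : Y, f (g y) = y) :
    ∃ s : Finset Y → Finset Y,
      (∀ A : Finset Y, A.Nonempty → A.card ≤ n → (s A).Nonempty ∧ (s A).card ≤ k) ∧
      (∀ B : Finset Y, B.Nonempty → B.card ≤ k → s B = B) ∧
      (∀ A B : Finset Y, A.Nonempty → A.card ≤ n → B.Nonempty → B.card ≤ n →
        hausdorffDist (s A : Set Y) (s B : Set Y) ≤
          (Lf * Lg * L) * hausdorffDist (A : Set Y) (B : Set Y)) :=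
  stmt3_general n k L Lf Lg r hmaps hretr hlip f g hLf hLg hf hg hfg
end

section
/- Let S¹ be the unit circle with the arclength (intrinsic) metric. For any integer n ≥ 2, any 1 ≤ k ≤ n−1, and any set A ⊆ S¹ with 1 ≤ |A| ≤ n, there exists a set B ⊆ S¹ with 1 ≤ |B| ≤ k such that d_H(A, B) ≤ π(n−1)/(kn). -/
/-!
At most `n` points on a circle of length `2π` leave a free arc of length at least `2π / n`, so
`A` lies in an arc of length `2π - 2π / n = 2 r k`, where `r = π (n - 1) / (k n)`. Cutting that
arc into `k` arcs of length `2 r`, every point of `A` is within `r` of the midpoint of its arc, and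
`B` is the set of midpoints of the arcs that meet `A`.
-/

open Metric Real

theorem Finset.exists_gap_of_card_sub_one_mul_le {K : Type*} [CommRing K] [LinearOrder K]
    [IsStrictOrderedRing K] {T : Finset K} {a b D : K} (hD : 0 ≤ D)
    (ha : a ∈ T) (hb : b ∈ T) (hab : a < b) (h : ((T.card : K) - 1) * D ≤ b - a) :
    ∃ u ∈ T, a < u ∧ ∀ t ∈ T, t < u → t ≤ u - D := by
  classical
  induction T using Finset.induction_on_max generalizing a b with
  | empty => simp at ha
  | insert x S hxS ih =>
    rw [Finset.card_insert_of_notMem fun hx => lt_irrefl x (hxS x hx), Nat.cast_succ,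
      add_sub_cancel_right] at h
    have hbx : b ≤ x := (Finset.mem_insert.1 hb).elim le_of_eq fun hbS => (hxS b hbS).le
    have haS : a ∈ S := (Finset.mem_insert.1 ha).resolve_left (hab.trans_le hbx).ne
    have hcard : (1 : K) ≤ S.card := by exact_mod_cast Finset.card_pos.2 ⟨a, haS⟩
    have extend : ∀ u ∈ S, a < u → (∀ t ∈ S, t < u → t ≤ u - D) →
        ∃ u ∈ insert x S, a < u ∧ ∀ t ∈ insert x S, t < u → t ≤ u - D := by
      refine fun u hu hau hgap => ⟨u, Finset.mem_insert_of_mem hu, hau, fun t ht htu => ?_⟩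
      rcases Finset.mem_insert.1 ht with rfl | htS
      · exact absurd (hxS u hu) htu.not_gt
      · exact hgap t htS htu
    rcases Finset.mem_insert.1 hb with rfl | hbS
    · set m := S.max' ⟨a, haS⟩
      rcases le_or_gt m (b - D) with hgap | hgap
      · refine ⟨b, Finset.mem_insert_self b S, hab, fun t ht htb => ?_⟩
        rcases Finset.mem_insert.1 ht with rfl | htS
        · exact absurd htb (lt_irrefl t)
        · exact (S.le_max' t htS).trans hgap
      · have hm : ((S.card : K) - 1) * D ≤ m - a := by rw [sub_mul, one_mul]; linarith
        have ham : a < m := by linarith [le_mul_of_one_le_left hD hcard]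
        obtain ⟨u, hu, hau, hgapu⟩ := ih haS (S.max'_mem _) ham hm
        exact extend u hu hau hgapu
    · obtain ⟨u, hu, hau, hgap⟩ := ih haS hbS hab (by rw [sub_mul, one_mul]; linarith)
      exact extend u hu hau hgap

theorem exists_nat_lt_abs_sub_le {K : Type*} [Field K] [LinearOrder K] [IsStrictOrderedRing K]
    [FloorSemiring K] {r c x : K} {k : ℕ} (hr : 0 < r) (hk : k ≠ 0)
    (hx : x ∈ Set.Icc c (c + 2 * r * k)) : ∃ j < k, |x - (c + (2 * j + 1) * r)| ≤ r := by
  have h2r : 0 < 2 * r := by positivity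
  set t := (x - c) / (2 * r)
  have ht : 0 ≤ t := div_nonneg (by linarith [hx.1]) h2r.le
  have htk : t ≤ k := by
    rw [div_le_iff₀ h2r]
    linarith [hx.2]
  refine ⟨min ⌊t⌋₊ (k - 1), by omega, abs_le.2 ⟨?_, ?_⟩⟩
  · have : ((min ⌊t⌋₊ (k - 1) : ℕ) : K) ≤ t :=
      (Nat.cast_le.2 (min_le_left _ _)).trans (Nat.floor_le ht)
    have := mul_le_mul_of_nonneg_left this h2r.le
    rw [mul_div_cancel₀ _ h2r.ne'] at this
    linarith
  · have : t ≤ ((min ⌊t⌋₊ (k - 1) : ℕ) : K) + 1 := by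
      rcases le_total ⌊t⌋₊ (k - 1) with h | h
      · rw [min_eq_left h]; exact (Nat.lt_floor_add_one t).le
      · rw [min_eq_right h, Nat.cast_sub (Nat.one_le_iff_ne_zero.2 hk)]; push_cast; linarith
    have := mul_le_mul_of_nonneg_left this h2r.le
    rw [mul_div_cancel₀ _ h2r.ne'] at this
    linarith

theorem AddCircle.dist_coe_le_abs_sub {p : ℝ} (x y : ℝ) :
    dist (x : AddCircle p) (y : AddCircle p) ≤ |x - y| := by
  rw [dist_eq_norm, ← AddCircle.coe_sub, ← Real.norm_eq_abs]
  exact QuotientAddGroup.norm_mk_le_norm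

theorem AddCircle.exists_lift_mem_Icc_of_card_le {p : ℝ} [hp : Fact (0 < p)] {n : ℕ}
    {A : Finset (AddCircle p)} (hA : A.Nonempty) (hcard : A.card ≤ n) :
    ∃ c : ℝ, ∀ a ∈ A, ∃ x ∈ Set.Icc c (c + (p - p / n)), (x : AddCircle p) = a := by
  classical
  have hp0 : 0 < p := hp.out
  set rep : AddCircle p → ℝ := fun a => AddCircle.equivIco p 0 a
  have hrep : ∀ a, (rep a : AddCircle p) = a := (AddCircle.equivIco p 0).symm_apply_apply
  set T := A.image rep
  have hT : ∀ t ∈ T, 0 ≤ t ∧ t < p := Finset.forall_mem_image.2 fun a _ => by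
    simpa using (AddCircle.equivIco p 0 a).2
  have hTne : T.Nonempty := hA.image rep
  set m := T.min' hTne
  have hm : 0 ≤ m := (hT m (T.min'_mem hTne)).1
  have hmp : m + p ∉ T := fun h => by linarith [(hT _ h).2]
  have hn : 0 < n := (Finset.card_pos.2 hA).trans_le hcard
  -- Adjoining `m + p` turns the gap that wraps around the circle into an ordinary gap.
  have hspread : (((insert (m + p) T).card : ℝ) - 1) * (p / n) ≤ m + p - m := by
    have hTn : (T.card : ℝ) ≤ n := by exact_mod_cast Finset.card_image_le.trans hcard
    rw [Finset.card_insert_of_notMem hmp, Nat.cast_succ, add_sub_cancel_right, add_sub_cancel_left]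
    calc (T.card : ℝ) * (p / n) ≤ n * (p / n) := by gcongr
      _ = p := mul_div_cancel₀ p (by positivity)
  obtain ⟨u, hu, hmu, hgap⟩ := Finset.exists_gap_of_card_sub_one_mul_le (by positivity)
    (Finset.mem_insert_of_mem (T.min'_mem hTne)) (Finset.mem_insert_self _ _) (by linarith)
    hspread
  have hmu' : m ≤ u - p / n := hgap m (Finset.mem_insert_of_mem (T.min'_mem hTne)) hmu
  have hup : u ≤ m + p := by
    rcases Finset.mem_insert.1 hu with rfl | huT
    · rfl
    · linarith [(hT u huT).2]
  refine ⟨u, fun a ha => ?_⟩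
  have ht : rep a ∈ T := Finset.mem_image_of_mem rep ha
  have hmt : m ≤ rep a := T.min'_le _ ht
  rcases le_or_gt u (rep a) with hut | htu
  · exact ⟨rep a, ⟨hut, by linarith [(hT _ ht).2]⟩, hrep a⟩
  · have := hgap (rep a) (Finset.mem_insert_of_mem ht) htu
    exact ⟨rep a + p, ⟨by linarith, by linarith⟩, by rw [AddCircle.coe_add_period, hrep]⟩

theorem Metric.exists_subset_hausdorffDist_le {α : Type*} [PseudoMetricSpace α] {A S : Finset α}
    (hA : A.Nonempty) {r : ℝ} (h : ∀ a ∈ A, ∃ b ∈ S, dist a b ≤ r) :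
    ∃ B ⊆ S, B.Nonempty ∧ hausdorffDist (A : Set α) B ≤ r := by
  classical
  obtain ⟨a₀, ha₀⟩ := hA
  obtain ⟨b₀, hb₀, hr⟩ := h a₀ ha₀
  refine ⟨S.filter fun b => ∃ a ∈ A, dist a b ≤ r, Finset.filter_subset _ _,
    ⟨b₀, Finset.mem_filter.2 ⟨hb₀, a₀, ha₀, hr⟩⟩,
    hausdorffDist_le_of_mem_dist (dist_nonneg.trans hr) (fun a ha => ?_) (fun b hb => ?_)⟩
  · obtain ⟨b, hb, hab⟩ := h a ha
    exact ⟨b, Finset.mem_filter.2 ⟨hb, a, ha, hab⟩, hab⟩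
  · obtain ⟨-, a, ha, hab⟩ := Finset.mem_filter.1 hb
    exact ⟨a, ha, dist_comm a b ▸ hab⟩

theorem stmt5_general (n k : ℕ) (hn : 2 ≤ n) (hk : 1 ≤ k)
    (A : Finset (AddCircle (2 * π))) (hA : A.Nonempty) (hcard : A.card ≤ n) :
    ∃ B : Finset (AddCircle (2 * π)), B.Nonempty ∧ B.card ≤ k ∧
      hausdorffDist (A : Set (AddCircle (2 * π))) (B : Set (AddCircle (2 * π))) ≤
        π * (n - 1) / (k * n) := by
  have : Fact (0 < 2 * π) := ⟨by positivity⟩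
  set r := π * (n - 1) / (k * n)
  have hn1 : (1 : ℝ) < n := by exact_mod_cast hn
  have hk0 : (0 : ℝ) < k := by exact_mod_cast hk
  have hr : 0 < r := by have := sub_pos.2 hn1; positivity
  have hrk : 2 * r * k = 2 * π - 2 * π / n := by unfold r; field_simp
  obtain ⟨c, hc⟩ := AddCircle.exists_lift_mem_Icc_of_card_le hA hcard
  set S := (Finset.range k).image fun j : ℕ => ((c + (2 * j + 1) * r : ℝ) : AddCircle (2 * π))
  obtain ⟨B, hBS, hB, hAB⟩ := exists_subset_hausdorffDist_le hA (S := S) fun a ha => by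
    obtain ⟨x, hx, rfl⟩ := hc a ha
    obtain ⟨j, hj, hxj⟩ := exists_nat_lt_abs_sub_le hr (by omega) (hrk ▸ hx)
    exact ⟨_, Finset.mem_image_of_mem _ (Finset.mem_range.2 hj),
      (AddCircle.dist_coe_le_abs_sub _ _).trans hxj⟩
  have hSk : S.card ≤ k := Finset.card_image_le.trans_eq (Finset.card_range k)
  exact ⟨B, hB, (Finset.card_le_card hBS).trans hSk, hAB⟩

theorem stmt5 (n k : ℕ) (hn : 2 ≤ n) (hk : 1 ≤ k) (hkn : k ≤ n - 1)
    (A : Finset (AddCircle (2 * π))) (hA : A.Nonempty) (hcard : A.card ≤ n) :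
    ∃ B : Finset (AddCircle (2 * π)), B.Nonempty ∧ B.card ≤ k ∧
      hausdorffDist (A : Set (AddCircle (2 * π))) (B : Set (AddCircle (2 * π))) ≤
        π * (n - 1) / (k * n) :=
  stmt5_general n k hn hk A hA hcard
end

section
/- Let R ⊆ S¹ be a set of at most kn points on the unit circle (circumference 2π) that is invariant under rotation by angle 2π/k. Then R is covered by k uniformly spaced closed arcs each of length 2π(n−1)/(kn). -/
/-!
Multiplication by `k` is a `k`-to-one self-cover of the circle whose fibres are the orbits of
the rotation by `2π/k`, so the image of `R` under `x ↦ k • x` has at most `n` points. Finitely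
many points `m ≤ n` on a circle of length `L` leave a gap of length at least `L/m` between two
cyclically consecutive ones, hence lie in a closed arc of length `L - L/n`. The preimage of that
arc under `x ↦ k • x` consists of `k` uniformly spaced arcs of length `(L - L/n)/k`.
-/

open Finset Metric Real

theorem Finset.exists_cyclic_gap {T : Finset ℝ} (hT : T.Nonempty) {δ : ℝ} (hδ : 0 ≤ δ) :
    ∃ t ∈ T, ∀ u ∈ T, t + δ / #T - δ ≤ u ∧ (t < u → t + δ / #T ≤ u) := by
  classical
  set rank : ℝ → ℕ := fun u => #{v ∈ T | v < u}
  -- Going once round `T` in increasing order, `u - δ * rank u / #T` drops exactly at the gaps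
  -- shorter than `δ / #T`; it cannot drop all the way round, so the gap after its minimiser is long.
  obtain ⟨t, ht, hmin⟩ := T.exists_min_image (fun u => u - δ * rank u / #T) hT
  refine ⟨t, ht, fun u hu => ?_⟩
  have hm : (0 : ℝ) < #T := by exact_mod_cast hT.card_pos
  have key : δ * ((rank u : ℝ) - rank t) / #T ≤ u - t := by
    have := hmin u hu
    rw [mul_sub, sub_div]
    linarith
  have rank_lt : rank t < #T := card_lt_card (filter_ssubset.2 ⟨t, ht, lt_irrefl t⟩)
  constructor
  · have rank_t_lt : ((rank t : ℕ) : ℝ) + 1 ≤ #T := by exact_mod_cast rank_lt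
    have hlow : δ / #T - δ ≤ δ * ((rank u : ℝ) - rank t) / #T := by
      rw [div_sub' hm.ne', div_le_div_iff_of_pos_right hm]
      nlinarith [(rank u).cast_nonneg (α := ℝ)]
    linarith
  · intro htu
    have rank_succ : rank t + 1 ≤ rank u := by
      have hsub : insert t {v ∈ T | v < t} ⊆ {v ∈ T | v < u} := by
        intro v hv
        simp only [mem_insert, mem_filter] at hv ⊢
        rcases hv with rfl | ⟨hvT, hvt⟩
        · exact ⟨ht, htu⟩
        · exact ⟨hvT, hvt.trans htu⟩
      simpa [card_insert_of_notMem] using card_le_card hsub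
    have hgap : δ / #T ≤ δ * ((rank u : ℝ) - rank t) / #T := by
      rw [div_le_div_iff_of_pos_right hm]
      have rank_succ' : ((rank t : ℕ) : ℝ) + 1 ≤ rank u := by exact_mod_cast rank_succ
      nlinarith
    linarith

namespace AddCircle

theorem dist_coe_le_abs_sub_s6 {p : ℝ} (a b : ℝ) : dist (a : AddCircle p) b ≤ |a - b| := by
  rw [dist_eq_norm, ← coe_sub]
  exact QuotientAddGroup.norm_mk_le_norm

variable {p : ℝ} [Fact (0 < p)]

theorem exists_subset_closedBall_of_card_le (S : Finset (AddCircle p)) {n : ℕ} (hS : #S ≤ n) :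
    ∃ c, (S : Set (AddCircle p)) ⊆ closedBall c ((p - p / n) / 2) := by
  classical
  have hp : 0 < p := Fact.out
  rcases S.eq_empty_or_nonempty with rfl | hSne
  · exact ⟨0, by simp⟩
  set rep : AddCircle p → ℝ := fun s => (equivIco p 0 s : ℝ)
  have rep_mem (s) : rep s ∈ Set.Ico 0 p := by simpa using (equivIco p 0 s).2
  have coe_rep (s) : (rep s : AddCircle p) = s := (equivIco p 0).symm_apply_apply s
  have hcard : #(S.image rep) = #S :=
    card_image_of_injective _ fun s s' h => by rw [← coe_rep s, ← coe_rep s', h]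
  obtain ⟨t, ht, hgap⟩ := exists_cyclic_gap (hSne.image rep) hp.le
  rw [hcard] at hgap
  have hm : (0 : ℝ) < #S := by exact_mod_cast hSne.card_pos
  have hdiv : p / n ≤ p / #S :=
    div_le_div_of_nonneg_left hp.le hm (by exact_mod_cast hS)
  have ht0 : 0 ≤ t := by
    obtain ⟨s, -, rfl⟩ := mem_image.1 ht
    exact (rep_mem s).1
  -- the arc `[t + p/n, t + p]` contains every point of `S`
  refine ⟨((t + p - (p - p / n) / 2 : ℝ) : AddCircle p), fun s hs => ?_⟩
  obtain ⟨hu, htu⟩ := hgap (rep s) (mem_image_of_mem _ hs)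
  rw [mem_closedBall, ← coe_rep s]
  rcases le_or_gt (rep s) t with hle | hlt
  · have := dist_coe_le_abs_sub_s6 (p := p) (rep s + p) (t + p - (p - p / n) / 2)
    rw [coe_add_period] at this
    refine this.trans (abs_le.2 ⟨?_, ?_⟩) <;> linarith
  · have := rep_mem s
    refine (dist_coe_le_abs_sub_s6 _ _).trans (abs_le.2 ⟨?_, ?_⟩) <;> linarith [htu hlt, this.2]

theorem mul_card_image_nsmul_le_card {k : ℕ} (hk : 0 < k) (R : Finset (AddCircle p))
    (hR : ∀ x ∈ R, x + ((p / k : ℝ) : AddCircle p) ∈ R) : k * #(R.image (k • ·)) ≤ #R := by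
  classical
  set u : AddCircle p := ((p / k : ℝ) : AddCircle p)
  have hu : addOrderOf u = k := addOrderOf_period_div hk
  refine mul_card_image_le_card R k fun y hy => ?_
  obtain ⟨x, hx, rfl⟩ := mem_image.1 hy
  have orbit_mem (j : ℕ) : x + j • u ∈ R := by
    induction j with
    | zero => simpa using hx
    | succ j ih => simpa [succ_nsmul, ← add_assoc] using hR _ ih
  have orbit_fiber (j : ℕ) : k • (x + j • u) = k • x := by
    rw [smul_add, smul_comm, ← hu, addOrderOf_nsmul_eq_zero, smul_zero, add_zero]
  calc k = #(range k) := (card_range k).symm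
    _ ≤ #{y ∈ R | k • y = k • x} :=
      card_le_card_of_injOn (fun j => x + j • u)
        (fun j _ => mem_filter.2 ⟨orbit_mem j, orbit_fiber j⟩)
        (fun i hi j hj hij => nsmul_injOn_Iio_addOrderOf (by simpa [hu] using hi)
          (by simpa [hu] using hj) (add_left_cancel hij))

theorem exists_mul_dist_le_dist_nsmul {k : ℕ} (hk : 0 < k) (x c : AddCircle p) :
    ∃ j < k, k * dist x (c + ((j * (p / k) : ℝ) : AddCircle p)) ≤ dist (k • x) (k • c) := by
  have hp : 0 < p := Fact.out
  have hk' : (0 : ℝ) < k := by exact_mod_cast hk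
  -- `b` represents `k • (x - c)` with `|b| = ‖k • (x - c)‖`; then `x - c - b / k` is `k`-torsion,
  -- i.e. a multiple of the rotation by `p / k`.
  set b : ℝ := (equivIco p (-(p / 2)) (k • (x - c)) : ℝ)
  have hb : b ∈ Set.Ico (-(p / 2)) (-(p / 2) + p) := (equivIco p (-(p / 2)) _).2
  have coe_b : (b : AddCircle p) = k • (x - c) := (equivIco p (-(p / 2))).symm_apply_apply _
  have norm_b : ‖(b : AddCircle p)‖ = |b| := by
    rw [norm_coe_eq_abs_iff p hp.ne', abs_of_pos hp]
    exact abs_le.2 ⟨hb.1, by linarith [hb.2]⟩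
  have torsion : k • (x - c - ((b / k : ℝ) : AddCircle p)) = 0 := by
    rw [nsmul_sub, ← coe_b, ← coe_nsmul, nsmul_eq_mul, mul_div_cancel₀ _ hk'.ne', sub_self]
  obtain ⟨j, hj, hjb⟩ := (AddCircle.nsmul_eq_zero_iff hk).1 torsion
  refine ⟨j, hj, ?_⟩
  have hsub : x - (c + ((j * (p / k) : ℝ) : AddCircle p)) = ((b / k : ℝ) : AddCircle p) := by
    rw [show (j : ℝ) * (p / k) = j / k * p by ring, hjb]
    abel
  rw [dist_eq_norm, hsub, dist_eq_norm, ← nsmul_sub, ← coe_b, norm_b]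
  calc (k : ℝ) * ‖((b / k : ℝ) : AddCircle p)‖ ≤ k * |b / k| :=
        mul_le_mul_of_nonneg_left QuotientAddGroup.norm_mk_le_norm hk'.le
    _ = |b| := by rw [abs_div, Nat.abs_cast, mul_div_cancel₀ _ hk'.ne']

end AddCircle

theorem stmt6_general (n k : ℕ)
    (R : Finset (AddCircle (2 * π))) (hcard : R.card ≤ k * n)
    (hinv : ∀ x ∈ R, x + ((2 * π / k : ℝ) : AddCircle (2 * π)) ∈ R) :
    ∃ c : AddCircle (2 * π),
      (R : Set (AddCircle (2 * π))) ⊆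
        ⋃ j ∈ Finset.range k,
          closedBall (c + ((j * (2 * π / k) : ℝ) : AddCircle (2 * π)))
            (π * (n - 1) / (k * n)) := by
  classical
  have : Fact (0 < 2 * π) := ⟨by positivity⟩
  rcases R.eq_empty_or_nonempty with rfl | hR
  · exact ⟨0, by simp⟩
  have hkn : 0 < k * n := hR.card_pos.trans_le hcard
  have hk : 0 < k := Nat.pos_of_mul_pos_right hkn
  have hn : 0 < n := Nat.pos_of_mul_pos_left hkn
  have himage : #(R.image (k • ·)) ≤ n :=
    Nat.le_of_mul_le_mul_left ((AddCircle.mul_card_image_nsmul_le_card hk R hinv).trans hcard) hk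
  obtain ⟨c, hc⟩ := AddCircle.exists_subset_closedBall_of_card_le _ himage
  obtain ⟨a, rfl⟩ := QuotientAddGroup.mk_surjective c
  have hk' : (0 : ℝ) < k := by exact_mod_cast hk
  have hn' : (0 : ℝ) < n := by exact_mod_cast hn
  set c' : AddCircle (2 * π) := ((a / k : ℝ) : AddCircle (2 * π))
  have hc' : k • c' = (a : AddCircle (2 * π)) := by
    rw [← AddCircle.coe_nsmul, nsmul_eq_mul, mul_div_cancel₀ _ hk'.ne']
  refine ⟨c', fun x hx => ?_⟩
  obtain ⟨j, hj, hdist⟩ := AddCircle.exists_mul_dist_le_dist_nsmul hk x c'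
  refine Set.mem_iUnion₂.2 ⟨j, mem_range.2 hj, mem_closedBall.2 ?_⟩
  have hxc := hc (mem_image_of_mem _ hx)
  rw [mem_closedBall, ← hc'] at hxc
  rw [le_div_iff₀ (by positivity)]
  have hrad : (2 * π - 2 * π / n) / 2 * n = π * (n - 1) := by field_simp
  linarith [mul_le_mul_of_nonneg_right (hdist.trans hxc) hn'.le]

/-- A set of at most `k*n` points on the circle of circumference `2π`, invariant under
rotation by `2π/k`, is covered by `k` uniformly spaced closed arcs of length
`2π(n-1)/(kn)` (i.e. closed balls of radius `π(n-1)/(kn)` centered at `k` uniformly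
spaced points). -/
theorem stmt6 (n k : ℕ) (hn : 1 ≤ n) (hk : 1 ≤ k)
    (R : Finset (AddCircle (2 * π))) (hcard : R.card ≤ k * n)
    (hinv : ∀ x ∈ R, x + ((2 * π / k : ℝ) : AddCircle (2 * π)) ∈ R) :
    ∃ c : AddCircle (2 * π),
      (R : Set (AddCircle (2 * π))) ⊆
        ⋃ j ∈ Finset.range k,
          closedBall (c + ((j * (2 * π / k) : ℝ) : AddCircle (2 * π)))
            (π * (n - 1) / (k * n)) :=
  stmt6_general n k R hcard hinv
end

section
/- Let 0 ≤ c < 1 and let A, B be nonempty finite subsets of [0, 1 + c/2] ∪ [2 − c/2, 2] such that each of A, B meets [2 − c/2, 2], and set s(A) = A ∩ [0, 1 + c/2], s(B) = B ∩ [0, 1 + c/2], assumed nonempty. If d_H(A, B) < 1 − c, then d_H(s(A), s(B)) ≤ d_H(A, B). -/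
/-! Cutting `A` and `B` down to `S` cannot increase their Hausdorff distance when the parts outside
`S` are farther than `d_H(A, B)` from the parts inside: every point of `B` that is close to a point
of `A ∩ S` then already lies in `B ∩ S`, and symmetrically. Here `S = [0, 1 + c/2]`, and the gap
`(1 + c/2, 2 - c/2)` separates the two pieces by `1 - c > d_H(A, B)`. -/

open Metric Set

section HausdorffRestrict

variable {X : Type*} [PseudoMetricSpace X] {A B S : Set X} {r : ℝ}

theorem infDist_inter_le_hausdorffDist (hfin : hausdorffEDist A B ≠ ⊤)
    (hsep : ∀ a ∈ A ∩ S, ∀ b ∈ B \ S, r ≤ dist a b) (hd : hausdorffDist A B < r)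
    {x : X} (hx : x ∈ A ∩ S) : infDist x (B ∩ S) ≤ hausdorffDist A B := by
  refine le_of_forall_gt_imp_ge_of_dense fun r' hr' => ?_
  obtain ⟨b, hbB, hxb⟩ := exists_dist_lt_of_hausdorffDist_lt hx.1 (lt_min hr' hd) hfin
  have hbS : b ∈ S := by
    by_contra hbS
    exact (min_le_right r' r).not_gt (hxb.trans_le' (hsep x hx b ⟨hbB, hbS⟩))
  calc infDist x (B ∩ S) ≤ dist x b := infDist_le_dist_of_mem ⟨hbB, hbS⟩
    _ ≤ r' := hxb.le.trans (min_le_left r' r)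

theorem hausdorffDist_inter_le_hausdorffDist (hfin : hausdorffEDist A B ≠ ⊤)
    (hsep : ∀ a ∈ A ∩ S, ∀ b ∈ B \ S, r ≤ dist a b)
    (hsep' : ∀ b ∈ B ∩ S, ∀ a ∈ A \ S, r ≤ dist b a) (hd : hausdorffDist A B < r) :
    hausdorffDist (A ∩ S) (B ∩ S) ≤ hausdorffDist A B := by
  refine hausdorffDist_le_of_infDist hausdorffDist_nonneg
    (fun x hx => infDist_inter_le_hausdorffDist hfin hsep hd hx) fun x hx => ?_
  rw [hausdorffDist_comm] at hd ⊢
  exact infDist_inter_le_hausdorffDist (hausdorffEDist_comm.trans_ne hfin) hsep' hd hx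

end HausdorffRestrict

theorem one_sub_le_dist_of_subset_union {c : ℝ} {A B : Set ℝ}
    (hB : B ⊆ Icc 0 (1 + c / 2) ∪ Icc (2 - c / 2) 2) :
    ∀ a ∈ A ∩ Icc 0 (1 + c / 2), ∀ b ∈ B \ Icc 0 (1 + c / 2), 1 - c ≤ dist a b := by
  rintro a ⟨-, -, ha⟩ b ⟨hbB, hbS⟩
  have hb : 2 - c / 2 ≤ b := ((hB hbB).resolve_left hbS).1
  rw [Real.dist_eq, abs_sub_comm]
  exact le_abs.mpr (Or.inl (by linarith))

theorem stmt12_general (c : ℝ)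
    (A B : Finset ℝ) (hA : A.Nonempty) (hB : B.Nonempty)
    (hAsub : (A : Set ℝ) ⊆ Icc 0 (1 + c / 2) ∪ Icc (2 - c / 2) 2)
    (hBsub : (B : Set ℝ) ⊆ Icc 0 (1 + c / 2) ∪ Icc (2 - c / 2) 2)
    (hd : hausdorffDist (A : Set ℝ) (B : Set ℝ) < 1 - c) :
    hausdorffDist ((A : Set ℝ) ∩ Icc 0 (1 + c / 2)) ((B : Set ℝ) ∩ Icc 0 (1 + c / 2)) ≤
      hausdorffDist (A : Set ℝ) (B : Set ℝ) := by
  have hfin : hausdorffEDist (A : Set ℝ) B ≠ ⊤ :=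
    hausdorffEDist_ne_top_of_nonempty_of_bounded hA.to_set hB.to_set
      A.finite_toSet.isBounded B.finite_toSet.isBounded
  exact hausdorffDist_inter_le_hausdorffDist hfin (one_sub_le_dist_of_subset_union hBsub)
    (one_sub_le_dist_of_subset_union hAsub) hd

theorem stmt12 (c : ℝ) (hc0 : 0 ≤ c) (hc1 : c < 1)
    (A B : Finset ℝ) (hA : A.Nonempty) (hB : B.Nonempty)
    (hAsub : (A : Set ℝ) ⊆ Icc 0 (1 + c / 2) ∪ Icc (2 - c / 2) 2)
    (hBsub : (B : Set ℝ) ⊆ Icc 0 (1 + c / 2) ∪ Icc (2 - c / 2) 2)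
    (hAmeets : ∃ a ∈ A, a ∈ Icc (2 - c / 2) 2)
    (hBmeets : ∃ b ∈ B, b ∈ Icc (2 - c / 2) 2)
    (hsA : ((A : Set ℝ) ∩ Icc 0 (1 + c / 2)).Nonempty)
    (hsB : ((B : Set ℝ) ∩ Icc 0 (1 + c / 2)).Nonempty)
    (hd : hausdorffDist (A : Set ℝ) (B : Set ℝ) < 1 - c) :
    hausdorffDist ((A : Set ℝ) ∩ Icc 0 (1 + c / 2)) ((B : Set ℝ) ∩ Icc 0 (1 + c / 2)) ≤
      hausdorffDist (A : Set ℝ) (B : Set ℝ) :=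
  stmt12_general c A B hA hB hAsub hBsub hd
end

section
/- Let X be a metric space, n ≥ 2, and r : X(n) → X(n−1) an L-Lipschitz retraction. Then for every A ∈ X(n) one has d_H(r(A), A) ≤ (L+1)·δ_n(A), and if X is geodesic, d_H(r(A), A) ≤ (L+1)·δ_n(A)/2. -/
/-!
A retraction `r` with constant `L` fixes every set `B` of at most `n - 1` points, so for any
such `B` the triangle inequality gives
`d_H(r A, A) ≤ d_H(r A, r B) + d_H(B, A) ≤ (L + 1) d_H(A, B)`.
If `|A| = n` and `p ≠ q` realise `δ_n(A)`, collapsing `q` onto `p` gives such a `B` with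
`d_H(A, B) ≤ δ_n(A)`; in a geodesic space, replacing both `p` and `q` by their midpoint gives one
with `d_H(A, B) ≤ δ_n(A) / 2`. Comparing two singletons shows `L ≥ 1`, so these bounds may be
multiplied by `L + 1`. If `|A| < n`, then `r A = A` and both sides vanish.
-/

open Metric Set

section Hausdorff

variable {X : Type*} [MetricSpace X]

lemma hausdorffEDist_finset_ne_top {A B : Finset X} (hA : A.Nonempty) (hB : B.Nonempty) :
    hausdorffEDist (A : Set X) B ≠ ⊤ :=
  hausdorffEDist_ne_top_of_nonempty_of_bounded hA.to_set hB.to_set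
    A.finite_toSet.isBounded B.finite_toSet.isBounded

lemma hausdorffDist_le_add_one_mul_of_le_mul {R A B : Finset X} {L : ℝ}
    (hR : R.Nonempty) (hB : B.Nonempty)
    (h : hausdorffDist (R : Set X) B ≤ L * hausdorffDist (A : Set X) B) :
    hausdorffDist (R : Set X) A ≤ (L + 1) * hausdorffDist (A : Set X) B := by
  calc hausdorffDist (R : Set X) A
      ≤ hausdorffDist (R : Set X) B + hausdorffDist (B : Set X) A :=
        hausdorffDist_triangle (hausdorffEDist_finset_ne_top hR hB)
    _ ≤ L * hausdorffDist (A : Set X) B + hausdorffDist (A : Set X) B := by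
        rw [hausdorffDist_comm (s := (B : Set X))]; gcongr
    _ = (L + 1) * hausdorffDist (A : Set X) B := by ring

lemma Finset.card_insert_erase_erase_lt {α : Type*} [DecidableEq α] {A : Finset α} {p q : α}
    (m : α) (hp : p ∈ A) (hq : q ∈ A) (hpq : p ≠ q) :
    (insert m ((A.erase p).erase q)).card < A.card := by
  have hq' : q ∈ A.erase p := Finset.mem_erase.2 ⟨hpq.symm, hq⟩
  have h₁ := Finset.card_erase_lt_of_mem hq'
  have h₂ := Finset.card_erase_lt_of_mem hp
  have h₃ := Finset.card_insert_le m ((A.erase p).erase q)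
  omega

section Erase

variable [DecidableEq X]

lemma hausdorffDist_erase_le {A : Finset X} {p q : X} (hp : p ∈ A) (hpq : p ≠ q) :
    hausdorffDist (A : Set X) (A.erase q) ≤ dist p q := by
  have hp' : p ∈ A.erase q := Finset.mem_erase.2 ⟨hpq, hp⟩
  apply hausdorffDist_le_of_mem_dist dist_nonneg
  · intro x hx
    by_cases hxq : x = q
    · exact ⟨p, hp', by rw [hxq, dist_comm]⟩
    · exact ⟨x, Finset.mem_erase.2 ⟨hxq, hx⟩, by simp⟩
  · exact fun x hx => ⟨x, Finset.mem_of_mem_erase hx, by simp⟩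

lemma hausdorffDist_insert_erase_erase_le {A : Finset X} {p q : X} (m : X) (hp : p ∈ A) :
    hausdorffDist (A : Set X) (insert m ((A.erase p).erase q) : Finset X) ≤
      max (dist p m) (dist q m) := by
  have hm : m ∈ insert m ((A.erase p).erase q) := Finset.mem_insert_self _ _
  apply hausdorffDist_le_of_mem_dist (dist_nonneg.trans (le_max_left _ _))
  · intro x hx
    by_cases hxp : x = p
    · exact ⟨m, hm, by rw [hxp]; exact le_max_left _ _⟩
    by_cases hxq : x = q
    · exact ⟨m, hm, by rw [hxq]; exact le_max_right _ _⟩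
    refine ⟨x, ?_, by simp⟩
    exact Finset.mem_insert_of_mem (Finset.mem_erase.2 ⟨hxq, Finset.mem_erase.2 ⟨hxp, hx⟩⟩)
  · intro x hx
    rcases Finset.mem_insert.1 (Finset.mem_coe.1 hx) with rfl | hx
    · exact ⟨p, hp, by rw [dist_comm]; exact le_max_left _ _⟩
    · exact ⟨x, Finset.mem_of_mem_erase (Finset.mem_of_mem_erase hx), by simp⟩

end Erase

lemma dist_midpoint_of_geodesic {p q : X} {γ : ℝ → X} (h₀ : γ 0 = p) (h₁ : γ 1 = q)
    (hγ : ∀ s ∈ Icc (0 : ℝ) 1, ∀ t ∈ Icc (0 : ℝ) 1,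
      dist (γ s) (γ t) = |s - t| * dist p q) :
    dist p (γ (1 / 2)) = dist p q / 2 ∧ dist q (γ (1 / 2)) = dist p q / 2 := by
  have hhalf : (1 / 2 : ℝ) ∈ Icc (0 : ℝ) 1 := by norm_num
  have hp := hγ 0 (by norm_num) (1 / 2) hhalf
  have hq := hγ 1 (by norm_num) (1 / 2) hhalf
  rw [h₀] at hp
  rw [h₁] at hq
  norm_num at hp hq
  constructor <;> linarith

lemma exists_dist_eq_minSep {n : ℕ} {A : Finset X} (hA : A.card = n) (hn : 2 ≤ n) :
    ∃ p ∈ A, ∃ q ∈ A, p ≠ q ∧ dist p q = minSep n A := by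
  set S : Set ℝ := {d : ℝ | ∃ p ∈ A, ∃ q ∈ A, p ≠ q ∧ dist p q = d}
  have hfin : S.Finite := by
    refine ((A.finite_toSet.prod A.finite_toSet).image fun pq : X × X => dist pq.1 pq.2).subset ?_
    rintro d ⟨p, hp, q, hq, -, rfl⟩
    exact ⟨(p, q), ⟨hp, hq⟩, rfl⟩
  have hne : S.Nonempty := by
    obtain ⟨p, hp, q, hq, hpq⟩ := Finset.one_lt_card.1 (by omega : 1 < A.card)
    exact ⟨dist p q, p, hp, q, hq, hpq, rfl⟩
  rw [minSep, if_pos hA]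
  exact hne.csInf_mem hfin

section Retraction

variable {n : ℕ} {L : ℝ} {r : Finset X → Finset X}
  (hretr : ∀ B : Finset X, B.Nonempty → B.card ≤ n - 1 → r B = B)
  (hlip : ∀ A B : Finset X, A.Nonempty → A.card ≤ n → B.Nonempty → B.card ≤ n →
    hausdorffDist (r A : Set X) (r B : Set X) ≤ L * hausdorffDist (A : Set X) (B : Set X))
include hretr hlip

lemma one_le_of_retraction (hn : 2 ≤ n) {p q : X} (hpq : p ≠ q) : 1 ≤ L := by
  have hsingle : ∀ x : X, r {x} = {x} := fun x =>
    hretr {x} (Finset.singleton_nonempty x) (by simp only [Finset.card_singleton]; omega)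
  have h := hlip {p} {q} (Finset.singleton_nonempty p) (by simp only [Finset.card_singleton]; omega)
    (Finset.singleton_nonempty q) (by simp only [Finset.card_singleton]; omega)
  simp only [hsingle, Finset.coe_singleton, hausdorffDist_singleton] at h
  have hd : 0 < dist p q := dist_pos.2 hpq
  nlinarith

lemma hausdorffDist_retraction_le
    (hmaps : ∀ A : Finset X, A.Nonempty → A.card ≤ n → (r A).Nonempty) {A B : Finset X}
    (hA : A.Nonempty) (hAn : A.card ≤ n) (hB : B.Nonempty) (hBn : B.card ≤ n - 1) :
    hausdorffDist (r A : Set X) A ≤ (L + 1) * hausdorffDist (A : Set X) B := by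
  have h := hlip A B hA hAn hB (hBn.trans (Nat.sub_le n 1))
  rw [hretr B hB hBn] at h
  exact hausdorffDist_le_add_one_mul_of_le_mul (hmaps A hA hAn) hB h

lemma hausdorffDist_retraction_le_mul_minSep (hn : 2 ≤ n)
    (hmaps : ∀ A : Finset X, A.Nonempty → A.card ≤ n → (r A).Nonempty) (c : ℝ)
    (hnear : ∀ A : Finset X, ∀ p ∈ A, ∀ q ∈ A, p ≠ q →
      ∃ B : Finset X, B.Nonempty ∧ B.card < A.card ∧
        hausdorffDist (A : Set X) B ≤ c * dist p q)
    {A : Finset X} (hA : A.Nonempty) (hAn : A.card ≤ n) :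
    hausdorffDist (r A : Set X) A ≤ (L + 1) * (c * minSep n A) := by
  by_cases hcard : A.card = n
  · obtain ⟨p, hp, q, hq, hpq, hsep⟩ := exists_dist_eq_minSep hcard hn
    obtain ⟨B, hB, hBA, hAB⟩ := hnear A p hp q hq hpq
    have hL := one_le_of_retraction hretr hlip hn hpq
    calc hausdorffDist (r A : Set X) A ≤ (L + 1) * hausdorffDist (A : Set X) B :=
          hausdorffDist_retraction_le hretr hlip hmaps hA hAn hB (by omega)
      _ ≤ (L + 1) * (c * minSep n A) := by rw [← hsep]; gcongr
  · rw [hretr A hA (by omega), minSep, if_neg hcard]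
    simp

end Retraction

end Hausdorff

theorem stmt15 {X : Type*} [MetricSpace X] (n : ℕ) (hn : 2 ≤ n)
    (L : ℝ) (r : Finset X → Finset X)
    (hmaps : ∀ A : Finset X, A.Nonempty → A.card ≤ n → (r A).Nonempty ∧ (r A).card ≤ n - 1)
    (hretr : ∀ B : Finset X, B.Nonempty → B.card ≤ n - 1 → r B = B)
    (hlip : ∀ A B : Finset X, A.Nonempty → A.card ≤ n → B.Nonempty → B.card ≤ n →
      hausdorffDist (r A : Set X) (r B : Set X) ≤ L * hausdorffDist (A : Set X) (B : Set X)) :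
    (∀ A : Finset X, A.Nonempty → A.card ≤ n →
      hausdorffDist (r A : Set X) (A : Set X) ≤ (L + 1) * minSep n A) ∧
    ((∀ p q : X, ∃ γ : ℝ → X, γ 0 = p ∧ γ 1 = q ∧
        ∀ s ∈ Icc (0:ℝ) 1, ∀ t ∈ Icc (0:ℝ) 1, dist (γ s) (γ t) = |s - t| * dist p q) →
      ∀ A : Finset X, A.Nonempty → A.card ≤ n →
        hausdorffDist (r A : Set X) (A : Set X) ≤ (L + 1) * minSep n A / 2) := by
  classical
  have bound := hausdorffDist_retraction_le_mul_minSep hretr hlip hn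
    (fun A hA hAn => (hmaps A hA hAn).1)
  refine ⟨fun A hA hAn => ?_, fun hgeo A hA hAn => ?_⟩
  · have collapse : ∀ A : Finset X, ∀ p ∈ A, ∀ q ∈ A, p ≠ q → ∃ B : Finset X,
        B.Nonempty ∧ B.card < A.card ∧ hausdorffDist (A : Set X) B ≤ 1 * dist p q :=
      fun A p hp q hq hpq => ⟨A.erase q, ⟨p, Finset.mem_erase.2 ⟨hpq, hp⟩⟩,
        Finset.card_erase_lt_of_mem hq,
        (one_mul (dist p q)).symm ▸ hausdorffDist_erase_le hp hpq⟩
    simpa using bound 1 collapse hA hAn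
  · have merge : ∀ A : Finset X, ∀ p ∈ A, ∀ q ∈ A, p ≠ q → ∃ B : Finset X,
        B.Nonempty ∧ B.card < A.card ∧ hausdorffDist (A : Set X) B ≤ 1 / 2 * dist p q := by
      intro A p hp q hq hpq
      obtain ⟨γ, h₀, h₁, hγ⟩ := hgeo p q
      obtain ⟨hpm, hqm⟩ := dist_midpoint_of_geodesic h₀ h₁ hγ
      refine ⟨_, Finset.insert_nonempty _ _,
        Finset.card_insert_erase_erase_lt (γ (1 / 2)) hp hq hpq, ?_⟩
      calc _ ≤ max (dist p (γ (1 / 2))) (dist q (γ (1 / 2))) :=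
            hausdorffDist_insert_erase_erase_le _ hp
        _ = 1 / 2 * dist p q := by rw [hpm, hqm, max_self]; ring
    calc _ ≤ (L + 1) * (1 / 2 * minSep n A) := bound (1 / 2) merge hA hAn
      _ = (L + 1) * minSep n A / 2 := by ring
end
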